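/- Let U ⊆ ℝ² be open, n ≥ 1, and let f : U → ℝⁿ be a smooth conformal immersion with conformal factor u. Then u satisfies the Liouville equation −Δu = e^{−2u}(⟨A_{11}, A_{22}⟩ − |A_{12}|²) pointwise on U, where Δu = ∂²_{11}u + ∂²_{22}u and A_{ij} is the second fundamental form of f. (Equivalently, −Δu = K_g e^{2u} where K_g := e^{−4u}(⟨A_{11},A_{22}⟩ − |A_{12}|²) is the Gauss curvature of the induced metric.) -/

import Mathlib

open MeasureTheory Real Filter Topology

noncomputable section

/-- First partial derivative in the `i`-th coordinate direction. -/
def pd {E : Type*} [NormedAddCommGroup E] [NormedSpace ℝ E]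
    (f : EuclideanSpace ℝ (Fin 2) → E) (i : Fin 2) (x : EuclideanSpace ℝ (Fin 2)) : E :=
  fderiv ℝ f x (EuclideanSpace.single i 1)

/-- Second partial derivative `∂_i ∂_j`. -/
def pd2 {E : Type*} [NormedAddCommGroup E] [NormedSpace ℝ E]
    (f : EuclideanSpace ℝ (Fin 2) → E) (i j : Fin 2) (x : EuclideanSpace ℝ (Fin 2)) : E :=
  pd (pd f j) i x

/-- `f` is a smooth conformal immersion on `U` with conformal factor `u`,
i.e. `⟨∂_i f, ∂_j f⟩ = e^{2u} δ_{ij}` on `U`. -/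
def IsConfImm {n : ℕ} (U : Set (EuclideanSpace ℝ (Fin 2)))
    (f : EuclideanSpace ℝ (Fin 2) → EuclideanSpace ℝ (Fin n))
    (u : EuclideanSpace ℝ (Fin 2) → ℝ) : Prop :=
  ContDiffOn ℝ (⊤ : ℕ∞) f U ∧ ContDiffOn ℝ (⊤ : ℕ∞) u U ∧
    ∀ x ∈ U, ∀ i j : Fin 2,
      (inner ℝ (pd f i x) (pd f j x) : ℝ) = Real.exp (2 * u x) * (if i = j then 1 else 0)

/-- Second fundamental form `A_{ij}`: the normal component of the Hessian. -/
def sff {n : ℕ} (f : EuclideanSpace ℝ (Fin 2) → EuclideanSpace ℝ (Fin n))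
    (u : EuclideanSpace ℝ (Fin 2) → ℝ) (i j : Fin 2) (x : EuclideanSpace ℝ (Fin 2)) :
    EuclideanSpace ℝ (Fin n) :=
  pd2 f i j x - Real.exp (-(2 * u x)) •
    ((inner ℝ (pd2 f i j x) (pd f 0 x) : ℝ) • pd f 0 x +
     (inner ℝ (pd2 f i j x) (pd f 1 x) : ℝ) • pd f 1 x)

/-!
Write `λ = e^{2u}` and `f_i = ∂_i f`, so that `⟨f_i, f_j⟩ = λ δ_ij`. Differentiating this and
using the symmetry of `f_ij` gives, by the Koszul trick, the Christoffel symbols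
`⟨f_ij, f_k⟩ = λ (u_i δ_jk + u_j δ_ik - u_k δ_ij)`. Since `f_001 = f_010`,
`⟨f_00, f_11⟩ - |f_01|² = ∂_1 ⟨f_00, f_1⟩ - ∂_0 ⟨f_01, f_1⟩ = -λ (Δu + 2 |∇u|²)`.
Passing to normal components subtracts `λ⁻¹ ∑_k (⟨f_00, f_k⟩⟨f_11, f_k⟩ - ⟨f_01, f_k⟩²) = -2 λ |∇u|²`,
which leaves `⟨A_00, A_11⟩ - |A_01|² = -λ Δu`.
-/

open scoped InnerProductSpace

theorem inner_sub_proj_sub_proj {E : Type*} [NormedAddCommGroup E] [InnerProductSpace ℝ E]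
    {e₀ e₁ : E} {c : ℝ} (h₀₁ : ⟪e₀, e₁⟫_ℝ = 0) (h₀ : c * ⟪e₀, e₀⟫_ℝ = 1)
    (h₁ : c * ⟪e₁, e₁⟫_ℝ = 1) (a b : E) :
    ⟪a - c • (⟪a, e₀⟫_ℝ • e₀ + ⟪a, e₁⟫_ℝ • e₁), b - c • (⟪b, e₀⟫_ℝ • e₀ + ⟪b, e₁⟫_ℝ • e₁)⟫_ℝ
      = ⟪a, b⟫_ℝ - c * (⟪a, e₀⟫_ℝ * ⟪b, e₀⟫_ℝ + ⟪a, e₁⟫_ℝ * ⟪b, e₁⟫_ℝ) := by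
  simp only [inner_sub_left, inner_sub_right, inner_add_left, inner_add_right,
    real_inner_smul_left, real_inner_smul_right, real_inner_comm e₀ e₁, h₀₁, real_inner_comm b e₀,
    real_inner_comm b e₁]
  linear_combination (c * ⟪a, e₀⟫_ℝ * ⟪b, e₀⟫_ℝ) * h₀ + (c * ⟪a, e₁⟫_ℝ * ⟪b, e₁⟫_ℝ) * h₁

local notation "ℝ²" => EuclideanSpace ℝ (Fin 2)

section PartialDerivatives

variable {U : Set ℝ²} {x : ℝ²} {F : Type*} [NormedAddCommGroup F] [NormedSpace ℝ F]

theorem ContDiffOn.pd {g : ℝ² → F} (hg : ContDiffOn ℝ (⊤ : ℕ∞) g U) (hU : IsOpen U) (i : Fin 2) :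
    ContDiffOn ℝ (⊤ : ℕ∞) (pd g i) U :=
  (hg.fderiv_of_isOpen hU (by simp)).clm_apply contDiffOn_const

theorem ContDiffOn.differentiableAt_of_isOpen {E : Type*} [NormedAddCommGroup E]
    [NormedSpace ℝ E] {V : Set E} {y : E} {g : E → F} (hg : ContDiffOn ℝ (⊤ : ℕ∞) g V)
    (hV : IsOpen V) (hy : y ∈ V) : DifferentiableAt ℝ g y :=
  (hg.differentiableOn (by simp)).differentiableAt (hV.mem_nhds hy)

theorem pd_congr_of_eqOn {g h : ℝ² → F} (hU : IsOpen U) (hx : x ∈ U) (hgh : Set.EqOn g h U)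
    (i : Fin 2) : pd g i x = pd h i x := by
  rw [pd, (eventuallyEq_of_mem (hU.mem_nhds hx) hgh).fderiv_eq, pd]

theorem pd_const (c : F) (i : Fin 2) : pd (fun _ => c) i x = 0 := by
  simp [pd]

theorem pd_neg (g : ℝ² → F) (i : Fin 2) : pd (fun y => -g y) i x = -pd g i x := by
  simp [pd, fderiv_fun_neg]

theorem pd_exp_two_mul_mul {u g : ℝ² → ℝ} (hu : DifferentiableAt ℝ u x)
    (hg : DifferentiableAt ℝ g x) (i : Fin 2) :
    pd (fun y => exp (2 * u y) * g y) i x = exp (2 * u x) * (2 * pd u i x * g x + pd g i x) := by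
  rw [pd, fderiv_fun_mul ((hu.const_mul 2).exp) hg, ((hu.hasFDerivAt.const_mul 2).exp).fderiv]
  simp [pd, smul_eq_mul]
  ring

theorem pd_inner {m : ℕ} {g h : ℝ² → EuclideanSpace ℝ (Fin m)} (hg : DifferentiableAt ℝ g x)
    (hh : DifferentiableAt ℝ h x) (i : Fin 2) :
    pd (fun y => ⟪g y, h y⟫_ℝ) i x = ⟪g x, pd h i x⟫_ℝ + ⟪pd g i x, h x⟫_ℝ :=
  fderiv_inner_apply (𝕜 := ℝ) hg hh _

theorem pd2_comm {g : ℝ² → F} (hg : ContDiffOn ℝ (⊤ : ℕ∞) g U) (hU : IsOpen U) (hx : x ∈ U)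
    (i j : Fin 2) : pd2 g i j x = pd2 g j i x := by
  have h2 : ((2 : ℕ∞) : WithTop ℕ∞) ≤ ((⊤ : ℕ∞) : WithTop ℕ∞) := WithTop.coe_le_coe.mpr le_top
  have hsymm := ((hg x hx).contDiffAt (hU.mem_nhds hx)).isSymmSndFDerivAt (by simpa using h2)
  have hd := (hg.fderiv_of_isOpen hU (by simp)).differentiableAt_of_isOpen hU hx
  have hpd2 (a b : Fin 2) : pd2 g a b x
      = fderiv ℝ (fderiv ℝ g) x (EuclideanSpace.single a 1) (EuclideanSpace.single b 1) := by
    unfold pd2 pd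
    rw [fderiv_clm_apply hd (differentiableAt_const _)]
    simp
  rw [hpd2, hpd2, hsymm]

end PartialDerivatives

namespace IsConfImm

variable {n : ℕ} {U : Set ℝ²} {f : ℝ² → EuclideanSpace ℝ (Fin n)} {u : ℝ² → ℝ}
  {x : ℝ²}

theorem inner_pd2_pd_add_inner (hf : IsConfImm U f u) (hU : IsOpen U) (hx : x ∈ U)
    (i j k : Fin 2) :
    ⟪pd2 f i j x, pd f k x⟫_ℝ + ⟪pd2 f i k x, pd f j x⟫_ℝ
      = 2 * pd u i x * exp (2 * u x) * (if j = k then 1 else 0) := by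
  obtain ⟨hf, hu, hconf⟩ := hf
  have hdiff := pd_congr_of_eqOn hU hx (fun y hy => hconf y hy j k) i
  rw [pd_inner ((hf.pd hU j).differentiableAt_of_isOpen hU hx)
      ((hf.pd hU k).differentiableAt_of_isOpen hU hx),
    pd_exp_two_mul_mul (hu.differentiableAt_of_isOpen hU hx) (differentiableAt_const _),
    pd_const, ← real_inner_comm (pd f j x)] at hdiff
  simp only [pd2]
  linear_combination hdiff

theorem inner_pd2_pd (hf : IsConfImm U f u) (hU : IsOpen U) (hx : x ∈ U) (i j k : Fin 2) :
    ⟪pd2 f i j x, pd f k x⟫_ℝ = exp (2 * u x) *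
      (pd u i x * (if j = k then 1 else 0) + pd u j x * (if i = k then 1 else 0)
        - pd u k x * (if i = j then 1 else 0)) := by
  have hcomm (a b c : Fin 2) : ⟪pd2 f a b x, pd f c x⟫_ℝ = ⟪pd2 f b a x, pd f c x⟫_ℝ := by
    rw [pd2_comm hf.1 hU hx]
  linear_combination (hf.inner_pd2_pd_add_inner hU hx i j k + hf.inner_pd2_pd_add_inner hU hx j i k
    - hf.inner_pd2_pd_add_inner hU hx k i j - hcomm i k j - hcomm j k i - hcomm j i k) / 2

theorem inner_pd2_sub_norm_sq (hf : IsConfImm U f u) (hU : IsOpen U) (hx : x ∈ U) :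
    ⟪pd2 f 0 0 x, pd2 f 1 1 x⟫_ℝ - ‖pd2 f 0 1 x‖ ^ 2
      = -exp (2 * u x) * (pd2 u 0 0 x + pd2 u 1 1 x + 2 * (pd u 0 x ^ 2 + pd u 1 x ^ 2)) := by
  have hu := hf.2.1.differentiableAt_of_isOpen hU hx
  have hu₁ (i : Fin 2) := (hf.2.1.pd hU i).differentiableAt_of_isOpen hU hx
  have hf₁ (i : Fin 2) := (hf.1.pd hU i).differentiableAt_of_isOpen hU hx
  have hf₂ (i j : Fin 2) : DifferentiableAt ℝ (pd2 f i j) x :=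
    ((hf.1.pd hU j).pd hU i).differentiableAt_of_isOpen hU hx
  have h₁ := pd_congr_of_eqOn hU hx (g := fun y => ⟪pd2 f 0 0 y, pd f 1 y⟫_ℝ)
    (h := fun y => -(exp (2 * u y) * pd u 1 y)) (fun y hy => by simp [hf.inner_pd2_pd hU hy]) 1
  have h₀ := pd_congr_of_eqOn hU hx (g := fun y => ⟪pd2 f 1 0 y, pd f 1 y⟫_ℝ)
    (h := fun y => exp (2 * u y) * pd u 0 y) (fun y hy => by simp [hf.inner_pd2_pd hU hy]) 0
  have hf₃ : pd (pd2 f 0 0) 1 x = pd (pd2 f 1 0) 0 x := pd2_comm (hf.1.pd hU 0) hU hx 1 0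
  rw [pd_inner (hf₂ 0 0) (hf₁ 1), pd_neg, pd_exp_two_mul_mul hu (hu₁ 1), hf₃] at h₁
  rw [pd_inner (hf₂ 1 0) (hf₁ 1), pd_exp_two_mul_mul hu (hu₁ 0), pd2_comm hf.1 hU hx 1 0] at h₀
  rw [← real_inner_self_eq_norm_sq]
  simp only [pd2] at h₀ h₁ ⊢
  linear_combination h₁ - h₀

end IsConfImm

theorem stmt4_general {n : ℕ} (U : Set (EuclideanSpace ℝ (Fin 2))) (hU : IsOpen U)
    (f : EuclideanSpace ℝ (Fin 2) → EuclideanSpace ℝ (Fin n))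
    (u : EuclideanSpace ℝ (Fin 2) → ℝ) (hf : IsConfImm U f u) :
    ∀ x ∈ U,
      -(pd2 u 0 0 x + pd2 u 1 1 x) =
        Real.exp (-(2 * u x)) *
          ((inner ℝ (sff f u 0 0 x) (sff f u 1 1 x) : ℝ) - ‖sff f u 0 1 x‖ ^ 2) := by
  intro x hx
  have hexp : exp (-(2 * u x)) * exp (2 * u x) = 1 := by rw [← exp_add]; simp
  have hconf := hf.2.2 x hx
  have h₀₁ : ⟪pd f 0 x, pd f 1 x⟫_ℝ = 0 := by simpa using hconf 0 1
  have h₀ : exp (-(2 * u x)) * ⟪pd f 0 x, pd f 0 x⟫_ℝ = 1 := by rw [hconf]; simpa using hexp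
  have h₁ : exp (-(2 * u x)) * ⟪pd f 1 x, pd f 1 x⟫_ℝ = 1 := by rw [hconf]; simpa using hexp
  rw [← real_inner_self_eq_norm_sq, sff, sff, sff, inner_sub_proj_sub_proj h₀₁ h₀ h₁,
    inner_sub_proj_sub_proj h₀₁ h₀ h₁, real_inner_self_eq_norm_sq]
  simp only [hf.inner_pd2_pd hU hx, Fin.isValue, Fin.reduceEq, if_true, if_false]
  linear_combination -exp (-(2 * u x)) * hf.inner_pd2_sub_norm_sq hU hx
    + (pd2 u 0 0 x + pd2 u 1 1 x
        - 2 * exp (-(2 * u x)) * exp (2 * u x) * (pd u 0 x ^ 2 + pd u 1 x ^ 2)) * hexp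

/-- Liouville equation: `−Δu = e^{−2u}(⟨A_{11}, A_{22}⟩ − |A_{12}|²)` pointwise on `U`. -/
theorem stmt4 {n : ℕ} (hn : 1 ≤ n) (U : Set (EuclideanSpace ℝ (Fin 2))) (hU : IsOpen U)
    (f : EuclideanSpace ℝ (Fin 2) → EuclideanSpace ℝ (Fin n))
    (u : EuclideanSpace ℝ (Fin 2) → ℝ) (hf : IsConfImm U f u) :
    ∀ x ∈ U,
      -(pd2 u 0 0 x + pd2 u 1 1 x) =
        Real.exp (-(2 * u x)) *
          ((inner ℝ (sff f u 0 0 x) (sff f u 1 1 x) : ℝ) - ‖sff f u 0 1 x‖ ^ 2) :=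
  stmt4_general U hU f u hf
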